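/- arXiv:0906.5465 — 2 statements merged into one kernel-verified Lean document; each statement's English description precedes it below -/
import Mathlib

section
/- Let F be a probability distribution on a measurable space (𝔛,𝒜), let (e_i)_{i≥1} be an orthonormal system in L²(𝔛,F) (so that E|e_i(X*)| ≤ 1 for X* distributed as F), and let (f_{i_1,…,i_m}) be real coefficients with Σ_{i_1,…,i_m=1}^∞ |f_{i_1,…,i_m}| < ∞ such that f(t_1,…,t_m) = Σ_{i_1,…,i_m≥1} f_{i_1,…,i_m} e_{i_1}(t_1)⋯e_{i_m}(t_m) in L²(𝔛^m,F^m). Then: (i) for independent random variables X*_1,…,X*_m each with distribution F, the multiple series Σ_{i_1,…,i_m≥1} f_{i_1,…,i_m} e_{i_1}(X*_1)⋯e_{i_m}(X*_m) converges absolutely almost surely and its sum equals f(X*_1,…,X*_m) almost surely; and (ii) if (X_{j_1},…,X_{j_m}) is any random vector whose distribution is absolutely continuous with respect to F^m, the same series with X_{j_r} in place of X*_r converges absolutely almost surely and sums to f(X_{j_1},…,X_{j_m}) almost surely. -/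
open MeasureTheory Filter Topology

/-!
Each term `a_i ∏_r e_{i_r}(t_r)` has `L¹(F^m)`-norm at most `|a_i|`, because the `L¹`-norm of a
product over coordinates factorises and `‖e_j‖₁ ≤ ‖e_j‖₂ = 1`. Summable `L¹`-norms force the
series to converge absolutely `F^m`-almost everywhere, hence its cube partial sums converge
almost everywhere to its sum. They also converge to `f` in `L²`, hence in measure, and limits in
measure are almost everywhere unique.
-/

theorem integral_abs_le_one_of_integral_sq_eq_one {α : Type*} [MeasurableSpace α]
    {μ : Measure α} [IsProbabilityMeasure μ] {g : α → ℝ} (hg : MemLp g 2 μ)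
    (h : ∫ x, g x ^ 2 ∂μ = 1) : ∫ x, |g x| ∂μ ≤ 1 :=
  calc ∫ x, |g x| ∂μ ≤ ∫ x, (1 + g x ^ 2) / 2 ∂μ :=
        integral_mono (hg.integrable one_le_two).abs
          (((integrable_const 1).add hg.integrable_sq).div_const 2) fun x => by
            nlinarith [sq_abs (g x), sq_nonneg (|g x| - 1)]
    _ = 1 := by
        rw [integral_div, integral_add (integrable_const 1) hg.integrable_sq, h]
        norm_num

theorem ae_summable_abs_of_summable_integral_abs {α ι : Type*} [MeasurableSpace α]
    [Countable ι] {μ : Measure α} {g : ι → α → ℝ} (hg : ∀ i, Integrable (g i) μ)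
    (hs : Summable fun i => ∫ x, |g i x| ∂μ) : ∀ᵐ x ∂μ, Summable fun i => |g i x| := by
  simp_rw [← Real.norm_eq_abs] at hs ⊢
  refine summable_norm_of_tsum_eLpNorm_ne_top le_rfl (fun i => (hg i).1) ?_
  simp_rw [eLpNorm_one_eq_lintegral_enorm, ← ofReal_integral_norm_eq_lintegral_enorm (hg _),
    ← ENNReal.ofReal_tsum_of_nonneg (fun i => integral_nonneg fun _ => norm_nonneg _) hs]
  exact ENNReal.ofReal_ne_top

theorem tendstoInMeasure_of_tendsto_integral_sq_sub {α ι : Type*} [MeasurableSpace α]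
    {μ : Measure α} {l : Filter ι} {f : α → ℝ} {S : ι → α → ℝ} (hf : MemLp f 2 μ)
    (hS : ∀ N, MemLp (S N) 2 μ) (h : Tendsto (fun N => ∫ x, (f x - S N x) ^ 2 ∂μ) l (𝓝 0)) :
    TendstoInMeasure μ S l f := by
  refine tendstoInMeasure_of_tendsto_eLpNorm two_ne_zero (fun N => (hS N).1) hf.1 ?_
  have h_eLpNorm : ∀ N, eLpNorm (S N - f) 2 μ = ENNReal.ofReal √(∫ x, (f x - S N x) ^ 2 ∂μ) := by
    intro N
    rw [((hS N).sub hf).eLpNorm_eq_integral_rpow_norm two_ne_zero ENNReal.ofNat_ne_top]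
    simp only [ENNReal.toReal_ofNat, Real.rpow_two, Pi.sub_apply, Real.norm_eq_abs, sq_abs,
      Real.sqrt_eq_rpow, one_div, sub_sq_comm (S N _)]
  simp_rw [h_eLpNorm]
  simpa [Function.comp_def] using
    ((ENNReal.continuous_ofReal.comp Real.continuous_sqrt).tendsto 0).comp h

theorem tendsto_piFinset_range_atTop {ι : Type*} [Fintype ι] [DecidableEq ι] :
    Tendsto (fun N => Fintype.piFinset fun _ : ι => Finset.range N) atTop atTop :=
  tendsto_atTop_finset_of_monotone
    (fun _ _ hNM => Fintype.piFinset_subset _ _ fun _ => Finset.range_subset_range.2 hNM)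
    fun i => ⟨Finset.univ.sup i + 1, Fintype.mem_piFinset.2 fun r =>
      Finset.mem_range.2 (Nat.lt_succ_of_le (Finset.le_sup (Finset.mem_univ r)))⟩

section Pi

variable {ι 𝔛 : Type*} [Fintype ι] [MeasurableSpace 𝔛] {h : ι → 𝔛 → ℝ}

theorem integral_abs_pi_prod_le_one {μ : ι → Measure 𝔛} [∀ r, SigmaFinite (μ r)]
    (h_le : ∀ r, ∫ x, |h r x| ∂μ r ≤ 1) : ∫ t, |∏ r, h r (t r)| ∂Measure.pi μ ≤ 1 := by
  simp_rw [Finset.abs_prod]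
  rw [integral_fintype_prod_eq_prod fun r x => |h r x|]
  exact Finset.prod_le_one (fun r _ => integral_nonneg fun _ => abs_nonneg _) fun r _ => h_le r

variable {μ : ι → Measure 𝔛} [∀ r, IsProbabilityMeasure (μ r)]

theorem aestronglyMeasurable_pi_prod (hh : ∀ r, AEStronglyMeasurable (h r) (μ r)) :
    AEStronglyMeasurable (fun t : ι → 𝔛 => ∏ r, h r (t r)) (Measure.pi μ) :=
  Finset.aestronglyMeasurable_fun_prod _ fun r _ =>
    (hh r).comp_quasiMeasurePreserving (measurePreserving_eval μ r).quasiMeasurePreserving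

theorem memLp_two_pi_prod (hh : ∀ r, MemLp (h r) 2 (μ r)) :
    MemLp (fun t : ι → 𝔛 => ∏ r, h r (t r)) 2 (Measure.pi μ) := by
  refine (memLp_two_iff_integrable_sq (aestronglyMeasurable_pi_prod fun r => (hh r).1)).2 ?_
  simp_rw [← Finset.prod_pow]
  exact Integrable.fintype_prod fun r => (hh r).integrable_sq

end Pi

theorem stmt3_general {𝔛 : Type*} [MeasurableSpace 𝔛] (F : Measure 𝔛) [IsProbabilityMeasure F]
    (m : ℕ) (e : ℕ → 𝔛 → ℝ)
    (heL2 : ∀ i, MemLp (e i) 2 F)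
    (he_orth : ∀ i j, ∫ x, e i x * e j x ∂F = if i = j then 1 else 0)
    (a : (Fin m → ℕ) → ℝ)
    (ha : Summable fun i : Fin m → ℕ => |a i|)
    (f : (Fin m → 𝔛) → ℝ)
    (hfL2 : MemLp f 2 (Measure.pi fun _ : Fin m => F))
    (hexp : Tendsto (fun N => ∫ t, (f t - ∑ i ∈ Fintype.piFinset (fun _ : Fin m => Finset.range N),
        a i * ∏ r : Fin m, e (i r) (t r)) ^ 2 ∂(Measure.pi fun _ : Fin m => F))
      atTop (nhds 0)) :
    (∀ᵐ t ∂(Measure.pi fun _ : Fin m => F),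
      (Summable fun i : Fin m → ℕ => |a i * ∏ r : Fin m, e (i r) (t r)|) ∧
      HasSum (fun i : Fin m → ℕ => a i * ∏ r : Fin m, e (i r) (t r)) (f t)) ∧
    (∀ ν : Measure (Fin m → 𝔛), ν ≪ (Measure.pi fun _ : Fin m => F) →
      ∀ᵐ t ∂ν,
        (Summable fun i : Fin m → ℕ => |a i * ∏ r : Fin m, e (i r) (t r)|) ∧
        HasSum (fun i : Fin m → ℕ => a i * ∏ r : Fin m, e (i r) (t r)) (f t)) := by
  set μ := Measure.pi fun _ : Fin m => F
  set g : (Fin m → ℕ) → (Fin m → 𝔛) → ℝ := fun i t => a i * ∏ r, e (i r) (t r)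
  have he_abs (j : ℕ) : ∫ x, |e j x| ∂F ≤ 1 :=
    integral_abs_le_one_of_integral_sq_eq_one (heL2 j) (by simpa [sq] using he_orth j j)
  have hg_L2 (i : Fin m → ℕ) : MemLp (g i) 2 μ :=
    (memLp_two_pi_prod fun r => heL2 (i r)).const_mul (a i)
  have hg_abs (i : Fin m → ℕ) : ∫ t, |g i t| ∂μ ≤ |a i| := by
    simp_rw [g, abs_mul, integral_const_mul]
    exact mul_le_of_le_one_right (abs_nonneg _) (integral_abs_pi_prod_le_one fun r => he_abs (i r))
  have h_summable : ∀ᵐ t ∂μ, Summable fun i => |g i t| :=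
    ae_summable_abs_of_summable_integral_abs (fun i => (hg_L2 i).integrable one_le_two)
      (ha.of_nonneg_of_le (fun i => integral_nonneg fun _ => abs_nonneg _) hg_abs)
  have h_partial : ∀ᵐ t ∂μ, Tendsto
      (fun N => ∑ i ∈ Fintype.piFinset (fun _ : Fin m => Finset.range N), g i t) atTop
      (𝓝 (∑' i, g i t)) := by
    filter_upwards [h_summable] with t ht
    exact (summable_abs_iff.1 ht).hasSum.comp tendsto_piFinset_range_atTop
  have hS_L2 (N : ℕ) := memLp_finsetSum (Fintype.piFinset fun _ : Fin m => Finset.range N)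
    fun i _ => hg_L2 i
  have h_eq : f =ᵐ[μ] fun t => ∑' i, g i t :=
    tendstoInMeasure_ae_unique (tendstoInMeasure_of_tendsto_integral_sq_sub hfL2 hS_L2 hexp)
      (tendstoInMeasure_of_tendsto_ae (fun N => (hS_L2 N).1) h_partial)
  have h_main : ∀ᵐ t ∂μ, (Summable fun i => |g i t|) ∧ HasSum (fun i => g i t) (f t) := by
    filter_upwards [h_summable, h_eq] with t ht hft
    exact ⟨ht, hft ▸ (summable_abs_iff.1 ht).hasSum⟩
  exact ⟨h_main, fun ν hν => hν.ae_le h_main⟩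

/-- If a kernel `f` has an `L²(F^m)`-expansion over an orthonormal system
`(e_i)_{i≥1}` with absolutely summable coefficients, then (i) for independent `X*_1,…,X*_m`
with law `F` (i.e. almost everywhere with respect to the product measure `F^m`) the multiple
series converges absolutely and sums to `f`, and (ii) the same holds almost surely for any
random vector whose law is absolutely continuous with respect to `F^m`. -/
theorem stmt3 {𝔛 : Type*} [MeasurableSpace 𝔛] (F : Measure 𝔛) [IsProbabilityMeasure F]
    (m : ℕ) (e : ℕ → 𝔛 → ℝ)
    (he_meas : ∀ i, Measurable (e i))
    (heL2 : ∀ i, MemLp (e i) 2 F)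
    (he_orth : ∀ i j, ∫ x, e i x * e j x ∂F = if i = j then 1 else 0)
    (a : (Fin m → ℕ) → ℝ)
    (ha : Summable fun i : Fin m → ℕ => |a i|)
    (f : (Fin m → 𝔛) → ℝ) (hf_meas : Measurable f)
    (hfL2 : MemLp f 2 (Measure.pi fun _ : Fin m => F))
    (hexp : Tendsto (fun N => ∫ t, (f t - ∑ i ∈ Fintype.piFinset (fun _ : Fin m => Finset.range N),
        a i * ∏ r : Fin m, e (i r) (t r)) ^ 2 ∂(Measure.pi fun _ : Fin m => F))
      atTop (nhds 0)) :
    (∀ᵐ t ∂(Measure.pi fun _ : Fin m => F),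
      (Summable fun i : Fin m → ℕ => |a i * ∏ r : Fin m, e (i r) (t r)|) ∧
      HasSum (fun i : Fin m → ℕ => a i * ∏ r : Fin m, e (i r) (t r)) (f t)) ∧
    (∀ ν : Measure (Fin m → 𝔛), ν ≪ (Measure.pi fun _ : Fin m => F) →
      ∀ᵐ t ∂ν,
        (Summable fun i : Fin m → ℕ => |a i * ∏ r : Fin m, e (i r) (t r)|) ∧
        HasSum (fun i : Fin m → ℕ => a i * ∏ r : Fin m, e (i r) (t r)) (f t)) :=
  stmt3_general F m e heL2 he_orth a ha f hfL2 hexp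
end

section
/- Let (Y_i)_{i≥1} be i.i.d. random variables uniformly distributed on [−1,1], let (ξ_i)_{i≥1} be i.i.d. Bernoulli random variables with P(ξ_i = 0) = P(ξ_i = 1) = 1/2, independent of (Y_i), and set X_i := Y_{i+ξ_i}. Let f : [−1,1]² → ℝ be a measurable canonical kernel (∫_{−1}^1 f(t,s) ds = 0 for almost every t and ∫_{−1}^1 f(t,s) dt = 0 for almost every s) such that f(X_1,X_2) and f(Y_1,Y_1) are integrable. Then E f(X_1,X_2) = (1/4)·E f(Y_1,Y_1) = (1/8)∫_{−1}^1 f(y,y) dy. In particular, the expectation E f(X_1,X_2) depends on the values of f on the diagonal {t = s}. -/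
/-!
The coins `(ξ₁, ξ₂)` are independent of the sequence `Y` and uniform on `{0,1}²`, so splitting
according to their value gives `E f(X₁,X₂) = ¼ ∑_{a,b ∈ {0,1}} E f(Y_{1+a}, Y_{2+b})`, each
`f(Y_{1+a}, Y_{2+b})` being integrable because its restriction to an event of probability `¼`
independent of it is. Three of the four pairs consist of two distinct, hence independent, uniform
variables, and canonicity kills their expectations by Fubini; only the diagonal pair `(Y₂, Y₂)`
survives.
-/

open MeasureTheory ProbabilityTheory Filter

/-- The uniform distribution on `[-1,1]`. -/
noncomputable def uniformIcc : Measure ℝ :=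
  (2⁻¹ : ENNReal) • (volume.restrict (Set.Icc (-1 : ℝ) 1))

theorem integral_uniformIcc (g : ℝ → ℝ) :
    ∫ y, g y ∂uniformIcc = 2⁻¹ * ∫ y in (-1 : ℝ)..1, g y := by
  rw [uniformIcc, integral_smul_measure, intervalIntegral.integral_of_le (by norm_num),
    ← integral_Icc_eq_integral_Ioc]
  norm_num

theorem MeasurableSpace.comap_pi_lambda {Ω ι β : Type*} [MeasurableSpace β] (Y : ι → Ω → β) :
    MeasurableSpace.comap (fun ω i => Y i ω) MeasurableSpace.pi =
      ⨆ i, MeasurableSpace.comap (Y i) inferInstance := by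
  simp only [MeasurableSpace.pi, MeasurableSpace.comap_iSup, MeasurableSpace.comap_comp]
  rfl

theorem measurable_iSup_comap_pair {Ω ι β : Type*} [MeasurableSpace β] (ξ : ι → Ω → β)
    (i j : ι) : Measurable[⨆ l, MeasurableSpace.comap (ξ l) inferInstance]
      fun ω => (ξ i ω, ξ j ω) :=
  (Measurable.of_comap_le (le_iSup (fun l => MeasurableSpace.comap (ξ l) _) i)).prodMk
    (Measurable.of_comap_le (le_iSup (fun l => MeasurableSpace.comap (ξ l) _) j))

namespace ProbabilityTheory

variable {Ω 𝓧 : Type*} {m mΩ : MeasurableSpace Ω} [m𝓧 : MeasurableSpace 𝓧] {P : Measure Ω}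
  {X : Ω → 𝓧}

theorem Indep.integrable_comp_of_integrableOn (hm : m ≤ mΩ) (hindep : Indep m (m𝓧.comap X) P)
    (hX : AEMeasurable X P) {A : Set Ω} (hA : MeasurableSet[m] A) (hPA : P A ≠ 0)
    {g : 𝓧 → ℝ} (hg : Measurable g) (hint : IntegrableOn (fun ω => g (X ω)) A P) :
    Integrable (fun ω => g (X ω)) P := by
  have hind : (A.indicator fun _ => (1 : ℝ)) ⟂ᵢ[P] (g ∘ X) :=
    (hindep.indicator_indepFun 1 hA).comp measurable_id hg
  refine hind.integrable_right_of_integrable_op (fun x y : ℝ => x * y) 1 one_ne_zero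
    (by simp [enorm_mul]) ?_ ?_ ?_ ?_
  · have hprod : (fun ω => A.indicator (fun _ => (1 : ℝ)) ω * (g ∘ X) ω)
        = A.indicator fun ω => g (X ω) := by
      ext ω
      by_cases hω : ω ∈ A <;> simp [hω]
    exact hprod ▸ hint.integrable_indicator (hm A hA)
  · exact (stronglyMeasurable_const.indicator (hm A hA)).aestronglyMeasurable
  · exact (hg.comp_aemeasurable hX).aestronglyMeasurable
  · intro h0
    rw [Set.indicator_ae_eq_zero] at h0
    exact hPA (by simpa [Function.support_const] using h0)

section Selector

variable {κ : Type*} [MeasurableSpace κ] [MeasurableSingletonClass κ] {S : Ω → κ}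
  {g : κ → 𝓧 → ℝ}

theorem Indep.integral_comp_selector (hm : m ≤ mΩ) (hindep : Indep m (m𝓧.comap X) P)
    (hX : Measurable X) (hS : Measurable[m] S) (hg : ∀ k, Measurable (g k)) {s : Finset κ}
    (hs : ∀ ω, S ω ∈ s) (hint : Integrable (fun ω => g (S ω) (X ω)) P) :
    ∫ ω, g (S ω) (X ω) ∂P = ∑ k ∈ s, P.real (S ⁻¹' {k}) * ∫ ω, g k (X ω) ∂P := by
  have hcover : ⋃ k ∈ s, S ⁻¹' {k} = Set.univ :=
    Set.eq_univ_of_forall fun ω => Set.mem_biUnion (hs ω) rfl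
  have hfiber : ∀ k, MeasurableSet (S ⁻¹' {k}) := fun k => hm _ (hS (measurableSet_singleton k))
  calc ∫ ω, g (S ω) (X ω) ∂P = ∑ k ∈ s, ∫ ω in S ⁻¹' {k}, g (S ω) (X ω) ∂P := by
        rw [← integral_biUnion_finset s (fun k _ => hfiber k)
          (fun k _ l _ hkl => (Set.disjoint_singleton.2 hkl).preimage S)
          (fun k _ => hint.integrableOn), hcover, setIntegral_univ]
    _ = ∑ k ∈ s, ∫ ω in S ⁻¹' {k}, g k (X ω) ∂P :=
        Finset.sum_congr rfl fun k _ => setIntegral_congr_fun (hfiber k) fun ω hω => by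
          simp only [show S ω = k from hω]
    _ = ∑ k ∈ s, P.real (S ⁻¹' {k}) * ∫ ω, g k (X ω) ∂P :=
        Finset.sum_congr rfl fun k _ => hindep.setIntegral_eq_mul hm hX.aemeasurable
          (hS (measurableSet_singleton k)) (hg k).aestronglyMeasurable

theorem Indep.integrable_comp_selector (hm : m ≤ mΩ) (hindep : Indep m (m𝓧.comap X) P)
    (hX : Measurable X) (hS : Measurable[m] S) (hg : ∀ k, Measurable (g k))
    (hint : Integrable (fun ω => g (S ω) (X ω)) P) {k : κ} (hk : P (S ⁻¹' {k}) ≠ 0) :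
    Integrable (fun ω => g k (X ω)) P :=
  hindep.integrable_comp_of_integrableOn hm hX.aemeasurable (hS (measurableSet_singleton k)) hk
    (hg k) <| hint.integrableOn.congr_fun (fun ω hω => by simp only [show S ω = k from hω])
      (hm _ (hS (measurableSet_singleton k)))

end Selector

theorem IndepFun.integral_eq_zero_of_ae_integral_eq_zero {α β : Type*} [MeasurableSpace α]
    [MeasurableSpace β] [IsFiniteMeasure P] {U : Ω → α} {V : Ω → β} (hUV : U ⟂ᵢ[P] V)
    (hU : Measurable U) (hV : Measurable V) {f : α → β → ℝ} (hf : Measurable (Function.uncurry f))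
    (hcanon : ∀ᵐ t ∂(P.map U), ∫ s, f t s ∂(P.map V) = 0)
    (hint : Integrable (fun ω => f (U ω) (V ω)) P) : ∫ ω, f (U ω) (V ω) ∂P = 0 := by
  have hpair : Measurable fun ω => (U ω, V ω) := hU.prodMk hV
  have hmap : P.map (fun ω => (U ω, V ω)) = (P.map U).prod (P.map V) :=
    (indepFun_iff_map_prod_eq_prod_map_map hU.aemeasurable hV.aemeasurable).1 hUV
  have hint_prod : Integrable (Function.uncurry f) ((P.map U).prod (P.map V)) := by
    rw [← hmap]
    exact (integrable_map_measure hf.aestronglyMeasurable hpair.aemeasurable).2 hint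
  calc ∫ ω, f (U ω) (V ω) ∂P = ∫ p, Function.uncurry f p ∂((P.map U).prod (P.map V)) := by
        rw [← hmap, integral_map hpair.aemeasurable hf.aestronglyMeasurable]
        rfl
    _ = ∫ t, ∫ s, f t s ∂(P.map V) ∂(P.map U) := integral_prod _ hint_prod
    _ = 0 := by rw [integral_congr_ae hcanon, integral_zero]

section FairCoins

variable {ξ : ℕ → Ω → ℕ} {i j : ℕ}

theorem iIndepFun.measureReal_preimage_pair_eq (hξ : iIndepFun ξ P)
    (hξ0 : ∀ l, P {ω | ξ l ω = 0} = 1 / 2) (hξ1 : ∀ l, P {ω | ξ l ω = 1} = 1 / 2)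
    (hij : i ≠ j) {k : ℕ × ℕ} (hk : k ∈ Finset.range 2 ×ˢ Finset.range 2) :
    P.real ((fun ω => (ξ i ω, ξ j ω)) ⁻¹' {k}) = 1 / 4 := by
  have hhalf : ∀ l, ∀ c ∈ Finset.range 2, P (ξ l ⁻¹' {c}) = 1 / 2 := by
    intro l c hc
    obtain rfl | rfl : c = 0 ∨ c = 1 := by simp at hc; omega
    exacts [hξ0 l, hξ1 l]
  obtain ⟨a, b⟩ := k
  rw [Finset.mem_product] at hk
  rw [← Set.singleton_prod_singleton, Set.mk_preimage_prod, measureReal_def,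
    (hξ.indepFun hij).measure_inter_preimage_eq_mul _ _ (measurableSet_singleton a)
      (measurableSet_singleton b), hhalf i a hk.1, hhalf j b hk.2]
  norm_num

theorem integral_comp_fair_pair (hξ_meas : ∀ l, Measurable (ξ l)) (hξ_indep : iIndepFun ξ P)
    (hξi : ∀ ω, ξ i ω ≤ 1) (hξj : ∀ ω, ξ j ω ≤ 1)
    (hξ0 : ∀ l, P {ω | ξ l ω = 0} = 1 / 2) (hξ1 : ∀ l, P {ω | ξ l ω = 1} = 1 / 2)
    (hindep : Indep (⨆ l, MeasurableSpace.comap (ξ l) inferInstance) (m𝓧.comap X) P)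
    (hX : Measurable X) (hij : i ≠ j) {g : ℕ × ℕ → 𝓧 → ℝ} (hg : ∀ k, Measurable (g k))
    (hint : Integrable (fun ω => g (ξ i ω, ξ j ω) (X ω)) P) :
    ∫ ω, g (ξ i ω, ξ j ω) (X ω) ∂P =
      4⁻¹ * ∑ k ∈ Finset.range 2 ×ˢ Finset.range 2, ∫ ω, g k (X ω) ∂P := by
  have hmem : ∀ ω, (ξ i ω, ξ j ω) ∈ Finset.range 2 ×ˢ Finset.range 2 := fun ω => by
    simpa [Nat.lt_succ_iff] using ⟨hξi ω, hξj ω⟩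
  rw [hindep.integral_comp_selector (iSup_le fun l => (hξ_meas l).comap_le) hX
    (measurable_iSup_comap_pair ξ i j) hg hmem hint, Finset.mul_sum]
  refine Finset.sum_congr rfl fun k hk => ?_
  rw [hξ_indep.measureReal_preimage_pair_eq hξ0 hξ1 hij hk]
  norm_num

theorem integrable_comp_fair_pair (hξ_meas : ∀ l, Measurable (ξ l)) (hξ_indep : iIndepFun ξ P)
    (hξ0 : ∀ l, P {ω | ξ l ω = 0} = 1 / 2) (hξ1 : ∀ l, P {ω | ξ l ω = 1} = 1 / 2)
    (hindep : Indep (⨆ l, MeasurableSpace.comap (ξ l) inferInstance) (m𝓧.comap X) P)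
    (hX : Measurable X) (hij : i ≠ j) {g : ℕ × ℕ → 𝓧 → ℝ} (hg : ∀ k, Measurable (g k))
    (hint : Integrable (fun ω => g (ξ i ω, ξ j ω) (X ω)) P) {k : ℕ × ℕ}
    (hk : k ∈ Finset.range 2 ×ˢ Finset.range 2) : Integrable (fun ω => g k (X ω)) P := by
  refine hindep.integrable_comp_selector (iSup_le fun l => (hξ_meas l).comap_le) hX
    (measurable_iSup_comap_pair ξ i j) hg hint fun h0 => ?_
  simpa [measureReal_def, h0] using hξ_indep.measureReal_preimage_pair_eq hξ0 hξ1 hij hk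

end FairCoins

end ProbabilityTheory

theorem stmt10_general {Ω : Type*} [MeasurableSpace Ω] (P : Measure Ω) [IsProbabilityMeasure P]
    (Y : ℕ → Ω → ℝ) (ξ : ℕ → Ω → ℕ)
    (hY_meas : ∀ i, Measurable (Y i))
    (hξ_meas : ∀ i, Measurable (ξ i))
    (hY_indep : iIndepFun Y P)
    (hY_unif : ∀ i, Measure.map (Y i) P = uniformIcc)
    (hξ_indep : iIndepFun ξ P)
    (hξ_vals : ∀ i ω, ξ i ω ≤ 1)
    (hξ0 : ∀ i, P {ω | ξ i ω = 0} = 1 / 2)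
    (hξ1 : ∀ i, P {ω | ξ i ω = 1} = 1 / 2)
    (hYξ_indep : Indep
      (⨆ i, MeasurableSpace.comap (Y i) inferInstance)
      (⨆ i, MeasurableSpace.comap (ξ i) inferInstance) P)
    (X : ℕ → Ω → ℝ) (hX : ∀ i ω, X i ω = Y (i + ξ i ω) ω)
    (f : ℝ → ℝ → ℝ) (hf_meas : Measurable (Function.uncurry f))
    -- canonicity with respect to the uniform distribution on `[−1,1]`
    (hcanon1 : ∀ᵐ t ∂uniformIcc, ∫ s, f t s ∂uniformIcc = 0)
    (hint1 : Integrable (fun ω => f (X 1 ω) (X 2 ω)) P) :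
    ∫ ω, f (X 1 ω) (X 2 ω) ∂P = (1 / 4) * ∫ ω, f (Y 1 ω) (Y 1 ω) ∂P ∧
    ∫ ω, f (X 1 ω) (X 2 ω) ∂P = (1 / 8) * ∫ y in (-1 : ℝ)..1, f y y := by
  have hindep : Indep (⨆ i, MeasurableSpace.comap (ξ i) inferInstance)
      (MeasurableSpace.comap (fun ω i => Y i ω) MeasurableSpace.pi) P := by
    rw [MeasurableSpace.comap_pi_lambda]
    exact hYξ_indep.symm
  have hseq : Measurable fun ω i => Y i ω := measurable_pi_lambda _ hY_meas
  let g : ℕ × ℕ → (ℕ → ℝ) → ℝ := fun k y => f (y (1 + k.1)) (y (2 + k.2))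
  have hg : ∀ k, Measurable (g k) := fun k =>
    hf_meas.comp (f := fun y : ℕ → ℝ => (y (1 + k.1), y (2 + k.2)))
      ((measurable_pi_apply _).prodMk (measurable_pi_apply _))
  have hsel : ∀ ω, f (X 1 ω) (X 2 ω) = g (ξ 1 ω, ξ 2 ω) fun i => Y i ω := fun ω => by
    simp [g, hX]
  simp only [hsel] at hint1 ⊢
  have hint := fun k => integrable_comp_fair_pair hξ_meas hξ_indep hξ0 hξ1 hindep hseq
    (by norm_num) hg hint1 (k := k)
  have hoff : ∀ i j, i ≠ j → Integrable (fun ω => f (Y i ω) (Y j ω)) P →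
      ∫ ω, f (Y i ω) (Y j ω) ∂P = 0 := fun i j hij =>
    (hY_indep.indepFun hij).integral_eq_zero_of_ae_integral_eq_zero (hY_meas i) (hY_meas j)
      hf_meas (by rwa [hY_unif, hY_unif])
  have hdiag : ∀ i, ∫ ω, f (Y i ω) (Y i ω) ∂P = ∫ y, f y y ∂uniformIcc := fun i => by
    have hf_diag : Measurable fun y => f y y := hf_meas.comp (measurable_id.prodMk measurable_id)
    rw [← hY_unif i, integral_map (hY_meas i).aemeasurable hf_diag.aestronglyMeasurable]
  have hmain : ∫ ω, g (ξ 1 ω, ξ 2 ω) (fun i => Y i ω) ∂P =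
      1 / 4 * ∫ ω, f (Y 1 ω) (Y 1 ω) ∂P := by
    rw [integral_comp_fair_pair hξ_meas hξ_indep (hξ_vals 1) (hξ_vals 2) hξ0 hξ1 hindep hseq
      (by norm_num) hg hint1]
    simp only [Finset.sum_product, Finset.sum_range_succ, Finset.sum_range_zero, zero_add]
    change 4⁻¹ * (∫ ω, f (Y 1 ω) (Y 2 ω) ∂P + ∫ ω, f (Y 1 ω) (Y 3 ω) ∂P
      + (∫ ω, f (Y 2 ω) (Y 2 ω) ∂P + ∫ ω, f (Y 2 ω) (Y 3 ω) ∂P)) = _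
    rw [hoff 1 2 (by norm_num) (hint (0, 0) (by simp)),
      hoff 1 3 (by norm_num) (hint (0, 1) (by simp)),
      hoff 2 3 (by norm_num) (hint (1, 1) (by simp)), hdiag 2, ← hdiag 1]
    ring
  refine ⟨hmain, ?_⟩
  rw [hmain, hdiag 1, integral_uniformIcc]
  ring

/-- With `(Y_i)` i.i.d. uniform on `[−1,1]`, `(ξ_i)` i.i.d. symmetric Bernoulli
independent of `(Y_i)`, and `X_i := Y_{i+ξ_i}`, for any canonical kernel `f` (with respect to the
uniform distribution) with the needed integrability one has
`E f(X_1, X_2) = (1/4)·E f(Y_1, Y_1) = (1/8)·∫_{−1}^1 f(y,y) dy`. -/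
theorem stmt10 {Ω : Type*} [MeasurableSpace Ω] (P : Measure Ω) [IsProbabilityMeasure P]
    (Y : ℕ → Ω → ℝ) (ξ : ℕ → Ω → ℕ)
    (hY_meas : ∀ i, Measurable (Y i))
    (hξ_meas : ∀ i, Measurable (ξ i))
    (hY_indep : iIndepFun Y P)
    (hY_unif : ∀ i, Measure.map (Y i) P = uniformIcc)
    (hξ_indep : iIndepFun ξ P)
    (hξ_vals : ∀ i ω, ξ i ω ≤ 1)
    (hξ0 : ∀ i, P {ω | ξ i ω = 0} = 1 / 2)
    (hξ1 : ∀ i, P {ω | ξ i ω = 1} = 1 / 2)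
    (hYξ_indep : Indep
      (⨆ i, MeasurableSpace.comap (Y i) inferInstance)
      (⨆ i, MeasurableSpace.comap (ξ i) inferInstance) P)
    (X : ℕ → Ω → ℝ) (hX : ∀ i ω, X i ω = Y (i + ξ i ω) ω)
    (f : ℝ → ℝ → ℝ) (hf_meas : Measurable (Function.uncurry f))
    -- canonicity with respect to the uniform distribution on `[−1,1]`
    (hcanon1 : ∀ᵐ t ∂uniformIcc, ∫ s, f t s ∂uniformIcc = 0)
    (hcanon2 : ∀ᵐ s ∂uniformIcc, ∫ t, f t s ∂uniformIcc = 0)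
    (hint1 : Integrable (fun ω => f (X 1 ω) (X 2 ω)) P)
    (hint2 : Integrable (fun ω => f (Y 1 ω) (Y 1 ω)) P) :
    ∫ ω, f (X 1 ω) (X 2 ω) ∂P = (1 / 4) * ∫ ω, f (Y 1 ω) (Y 1 ω) ∂P ∧
    ∫ ω, f (X 1 ω) (X 2 ω) ∂P = (1 / 8) * ∫ y in (-1 : ℝ)..1, f y y :=
  stmt10_general P Y ξ hY_meas hξ_meas hY_indep hY_unif hξ_indep hξ_vals hξ0 hξ1 hYξ_indep X hX f
    hf_meas hcanon1 hint1
end
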